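/- Fix an integer j ≥ 2 and M ≥ 1. There exists a constant C′ > 0 depending only on j and M such that the following holds. Let Δ ≥ 1 and k ≥ 2 be integers with k ≥ Δ², let S₁, S₂, S₃, S₄ be pairwise disjoint finite sets with |S₁ ∪ S₂ ∪ S₃ ∪ S₄| ≤ 4Δ, and let {d_{e,i} : e ∈ S₁ ∪ S₂ ∪ S₃ ∪ S₄, 1 ≤ i ≤ k} be jointly independent random variables taking values in [0, M], with d_{e,1},…,d_{e,k} identically distributed for each e. Set P_i = Σ_{S₁} d_{e,i} − Σ_{S₂} d_{e,i}, Q_i = Σ_{S₁} d_{e,i} + Σ_{S₂} d_{e,i} + 2Σ_{S₃} d_{e,i} − 2Σ_{S₄} d_{e,i}, P̄ = k^{-1} Σ_i P_i, Q̄ = k^{-1} Σ_i Q_i, φ̂ = k^{-1} Σ_{i=1}^k (P_i − P̄)^{j−1}(Q_i − Q̄), and φ = E[(P₁ − E[P₁])^{j−1}(Q₁ − E[Q₁])]. Then |E[φ̂] − φ| ≤ C′ (MΔ)^j / √k. -/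

import Mathlib

open MeasureTheory ProbabilityTheory

private lemma aux_abs_pow_sub_pow {a b C : ℝ} (ha : |a| ≤ C) (hb : |b| ≤ C) :
    ∀ n : ℕ, |a ^ n - b ^ n| ≤ n * C ^ (n - 1) * |a - b| := by
  have hC : 0 ≤ C := (abs_nonneg a).trans ha
  intro n
  induction n with
  | zero => simp
  | succ n ih =>
    have hid : a ^ (n + 1) - b ^ (n + 1) = a * (a ^ n - b ^ n) + (a - b) * b ^ n := by ring
    have h1 : |a ^ (n + 1) - b ^ (n + 1)| ≤ C * |a ^ n - b ^ n| + |a - b| * C ^ n := by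
      rw [hid]
      refine (abs_add_le _ _).trans (add_le_add ?_ ?_)
      · rw [abs_mul]
        exact mul_le_mul ha le_rfl (abs_nonneg _) hC
      · rw [abs_mul]
        refine mul_le_mul le_rfl ?_ (abs_nonneg _) (abs_nonneg _)
        rw [abs_pow]
        exact pow_le_pow_left₀ (abs_nonneg _) hb n
    refine h1.trans ?_
    have h2 : C * |a ^ n - b ^ n| ≤ n * C ^ n * |a - b| := by
      refine (mul_le_mul_of_nonneg_left ih hC).trans ?_
      rcases Nat.eq_zero_or_pos n with h | h
      · subst h; simp
      · have he : C * (↑n * C ^ (n - 1) * |a - b|) = ↑n * (C ^ (n - 1) * C) * |a - b| := by ring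
        rw [he, ← pow_succ, Nat.sub_add_cancel h]
    have h3 : |a - b| * C ^ n ≤ 1 * C ^ n * |a - b| := by ring_nf; exact le_rfl
    have : C * |a ^ n - b ^ n| + |a - b| * C ^ n ≤ ((n : ℝ) + 1) * C ^ n * |a - b| := by
      nlinarith [h2, h3]
    refine this.trans_eq ?_
    push_cast
    norm_num

set_option maxHeartbeats 2000000 in
/-- Bias bound for the plug-in estimator
`φ̂ = k⁻¹ Σ_i (P_i − P̄)^{j−1}(Q_i − Q̄)` of
`φ = E[(P₁ − E P₁)^{j−1}(Q₁ − E Q₁)]`: if `k ≥ Δ²`, then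
`|E[φ̂] − φ| ≤ C′ (MΔ)^j / √k` with `C′` depending only on `j` and `M`. -/
theorem phi_hat_bias_bound (j : ℕ) (hj : 2 ≤ j) (M : ℝ) (hM : 1 ≤ M) :
    ∃ C' : ℝ, 0 < C' ∧
      ∀ (Δ k : ℕ) (hΔ : 1 ≤ Δ) (hk : 2 ≤ k) (hkΔ : Δ ^ 2 ≤ k),
      ∀ (E : Type) (_ : DecidableEq E) (S₁ S₂ S₃ S₄ : Finset E),
        Disjoint S₁ S₂ → Disjoint S₁ S₃ → Disjoint S₁ S₄ →
        Disjoint S₂ S₃ → Disjoint S₂ S₄ → Disjoint S₃ S₄ →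
        (S₁ ∪ S₂ ∪ S₃ ∪ S₄).card ≤ 4 * Δ →
      ∀ (Ω : Type) [MeasureSpace Ω], IsProbabilityMeasure (ℙ : Measure Ω) →
      ∀ (d : E → Fin k → Ω → ℝ),
        (∀ e i, Measurable (d e i)) →
        (∀ e ∈ S₁ ∪ S₂ ∪ S₃ ∪ S₄, ∀ (i : Fin k) (ω : Ω), d e i ω ∈ Set.Icc (0 : ℝ) M) →
        iIndepFun
          (fun p : ((S₁ ∪ S₂ ∪ S₃ ∪ S₄ : Finset E) × Fin k) => d p.1.1 p.2) ℙ →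
        (∀ e ∈ S₁ ∪ S₂ ∪ S₃ ∪ S₄, ∀ i i' : Fin k, IdentDistrib (d e i) (d e i') ℙ ℙ) →
        let P : Fin k → Ω → ℝ := fun i ω => ∑ e ∈ S₁, d e i ω - ∑ e ∈ S₂, d e i ω
        let Q : Fin k → Ω → ℝ := fun i ω =>
          ∑ e ∈ S₁, d e i ω + ∑ e ∈ S₂, d e i ω
            + 2 * ∑ e ∈ S₃, d e i ω - 2 * ∑ e ∈ S₄, d e i ω
        let phat : Ω → ℝ := fun ω =>
          (k : ℝ)⁻¹ * ∑ i, (P i ω - (k : ℝ)⁻¹ * ∑ i', P i' ω) ^ (j - 1)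
            * (Q i ω - (k : ℝ)⁻¹ * ∑ i', Q i' ω)
        let φ : ℝ := ∫ ω, (P ⟨0, by omega⟩ ω - ∫ ω', P ⟨0, by omega⟩ ω') ^ (j - 1)
            * (Q ⟨0, by omega⟩ ω - ∫ ω', Q ⟨0, by omega⟩ ω')
        |(∫ ω, phat ω) - φ| ≤ C' * (M * Δ) ^ j / Real.sqrt k := by
  classical
  refine ⟨j * 96 ^ j, by positivity, ?_⟩
  intro Δ k hΔ hk hkΔ E _inst S₁ S₂ S₃ S₄ h12 h13 h14 h23 h24 h34 hcard
    Ω _ hprob d hdm hdb hindep hid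
  intro P Q phat φ
  have hPdef : ∀ i ω, P i ω = ∑ e ∈ S₁, d e i ω - ∑ e ∈ S₂, d e i ω := fun _ _ => rfl
  have hQdef : ∀ i ω, Q i ω = ∑ e ∈ S₁, d e i ω + ∑ e ∈ S₂, d e i ω
      + 2 * ∑ e ∈ S₃, d e i ω - 2 * ∑ e ∈ S₄, d e i ω := fun _ _ => rfl
  set U : Finset E := S₁ ∪ S₂ ∪ S₃ ∪ S₄ with hU
  have hsub1 : S₁ ⊆ U := by intro x hx; simp [hU, Finset.mem_union, hx]
  have hsub2 : S₂ ⊆ U := by intro x hx; simp [hU, Finset.mem_union, hx]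
  have hsub3 : S₃ ⊆ U := by intro x hx; simp [hU, Finset.mem_union, hx]
  have hsub4 : S₄ ⊆ U := by intro x hx; simp [hU, Finset.mem_union, hx]
  have hk0 : (0:ℝ) < (k:ℝ) := by
    have : (0:ℕ) < k := by omega
    exact_mod_cast this
  have hM0 : (0:ℝ) ≤ M := le_trans zero_le_one hM
  have hΔ0 : (1:ℝ) ≤ (Δ:ℝ) := by exact_mod_cast hΔ
  set K : ℝ := 24 * M * Δ with hKdef
  have hK1 : (1:ℝ) ≤ K := by
    have : (1:ℝ) ≤ M * Δ := one_le_mul_of_one_le_of_one_le hM hΔ0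
    nlinarith
  have hK0 : (0:ℝ) < K := lt_of_lt_of_le one_pos hK1
  -- bound on sums over subsets of U
  have hsumb : ∀ s : Finset E, s ⊆ U → ∀ (i : Fin k) (ω : Ω),
      |∑ e ∈ s, d e i ω| ≤ 4 * M * Δ := by
    intro s hs i ω
    have h1 : |∑ e ∈ s, d e i ω| ≤ ∑ e ∈ s, |d e i ω| := Finset.abs_sum_le_sum_abs _ _
    have h2 : ∑ e ∈ s, |d e i ω| ≤ ∑ _e ∈ s, M := by
      refine Finset.sum_le_sum fun e he => ?_
      obtain ⟨h0, hMe⟩ := hdb e (hs he) i ω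
      rwa [abs_of_nonneg h0]
    have h3 : (∑ _e ∈ s, M) = (s.card : ℝ) * M := by
      rw [Finset.sum_const, nsmul_eq_mul]
    have h4 : (s.card : ℝ) ≤ 4 * Δ := by
      have : s.card ≤ 4 * Δ := le_trans (Finset.card_le_card hs) hcard
      exact_mod_cast this
    have h5 : (s.card : ℝ) * M ≤ 4 * Δ * M := by
      exact mul_le_mul_of_nonneg_right h4 hM0
    calc |∑ e ∈ s, d e i ω| ≤ (s.card : ℝ) * M := by rw [← h3]; exact h1.trans h2
      _ ≤ 4 * Δ * M := h5
      _ = 4 * M * Δ := by ring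
  have hPb : ∀ (i : Fin k) (ω : Ω), |P i ω| ≤ K := by
    intro i ω
    rw [hPdef]
    have := hsumb S₁ hsub1 i ω
    have := hsumb S₂ hsub2 i ω
    rw [hKdef]
    calc |∑ e ∈ S₁, d e i ω - ∑ e ∈ S₂, d e i ω|
        ≤ |∑ e ∈ S₁, d e i ω| + |∑ e ∈ S₂, d e i ω| := abs_sub _ _
      _ ≤ 4 * M * Δ + 4 * M * Δ := by gcongr <;> assumption
      _ ≤ 24 * M * Δ := by nlinarith
  have hQb : ∀ (i : Fin k) (ω : Ω), |Q i ω| ≤ K := by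
    intro i ω
    rw [hQdef]
    have h1 := hsumb S₁ hsub1 i ω
    have h2 := hsumb S₂ hsub2 i ω
    have h3 := hsumb S₃ hsub3 i ω
    have h4 := hsumb S₄ hsub4 i ω
    rw [hKdef]
    have e3 : |2 * ∑ e ∈ S₃, d e i ω| ≤ 2 * (4 * M * Δ) := by
      rw [abs_mul, abs_two]; nlinarith
    have e4 : |2 * ∑ e ∈ S₄, d e i ω| ≤ 2 * (4 * M * Δ) := by
      rw [abs_mul, abs_two]; nlinarith
    calc |∑ e ∈ S₁, d e i ω + ∑ e ∈ S₂, d e i ω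
          + 2 * ∑ e ∈ S₃, d e i ω - 2 * ∑ e ∈ S₄, d e i ω|
        ≤ |∑ e ∈ S₁, d e i ω| + |∑ e ∈ S₂, d e i ω|
          + |2 * ∑ e ∈ S₃, d e i ω| + |2 * ∑ e ∈ S₄, d e i ω| := by
          refine (abs_sub _ _).trans ?_
          gcongr
          refine (abs_add_le _ _).trans ?_
          gcongr
          exact abs_add_le _ _
      _ ≤ 4 * M * Δ + 4 * M * Δ + 2 * (4 * M * Δ) + 2 * (4 * M * Δ) := by
          gcongr <;> assumption
      _ ≤ 24 * M * Δ := by nlinarith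
  -- measurability
  have hPm : ∀ i, Measurable (P i) := fun i =>
    (Finset.measurable_sum S₁ fun e _ => hdm e i).sub
      (Finset.measurable_sum S₂ fun e _ => hdm e i)
  have hQm : ∀ i, Measurable (Q i) := fun i =>
    (((Finset.measurable_sum S₁ fun e _ => hdm e i).add
      (Finset.measurable_sum S₂ fun e _ => hdm e i)).add
      ((Finset.measurable_sum S₃ fun e _ => hdm e i).const_mul 2)).sub
      ((Finset.measurable_sum S₄ fun e _ => hdm e i).const_mul 2)
  -- integrability helper
  have hint : ∀ (f : Ω → ℝ) (c : ℝ), Measurable f → (∀ ω, |f ω| ≤ c) →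
      Integrable f ℙ := by
    intro f c hf hb
    exact (integrable_const c).mono' hf.aestronglyMeasurable
      (ae_of_all _ (by simpa [Real.norm_eq_abs] using hb))
  have habs_int : ∀ (f : Ω → ℝ) (c : ℝ), (∀ ω, |f ω| ≤ c) → |∫ ω, f ω| ≤ c := by
    intro f c hb
    have := norm_integral_le_of_norm_le_const (μ := (ℙ : Measure Ω)) (f := f) (C := c)
      (ae_of_all _ (by simpa [Real.norm_eq_abs] using hb))
    simpa [Real.norm_eq_abs] using this
  set i0 : Fin k := ⟨0, by omega⟩ with hi0
  set μP : ℝ := ∫ ω, P i0 ω with hμP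
  set μQ : ℝ := ∫ ω, Q i0 ω with hμQ
  have hμPb : |μP| ≤ K := habs_int _ _ (hPb i0)
  have hμQb : |μQ| ≤ K := habs_int _ _ (hQb i0)
  -- the identically-distributed coordinate vectors
  set emb : Fin k → (↥U ↪ ↥U × Fin k) :=
    fun i => ⟨fun e => (e, i), fun a b h => by simpa using congrArg Prod.fst h⟩ with hemb
  set T : Fin k → Finset (↥U × Fin k) := fun i => Finset.univ.map (emb i) with hT
  have hTmem : ∀ (i : Fin k) (p : ↥U × Fin k), p ∈ T i ↔ p.2 = i := by
    intro i p
    simp only [hT, Finset.mem_map, Finset.mem_univ, true_and, hemb,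
      Function.Embedding.coeFn_mk]
    constructor
    · rintro ⟨e, rfl⟩; rfl
    · intro h; exact ⟨p.1, by rw [← h]; rfl⟩
  have hTdisj : ∀ i i' : Fin k, i ≠ i' → Disjoint (T i) (T i') := by
    intro i i' hne
    rw [Finset.disjoint_left]
    intro p hp hp'
    rw [hTmem] at hp hp'
    exact hne (hp ▸ hp')
  set V : Fin k → Ω → (↥U → ℝ) := fun i ω e => d e.1 i ω with hV
  have hVm : ∀ i, Measurable (V i) := fun i =>
    measurable_pi_lambda _ fun e => hdm e.1 i
  have hlaw : ∀ i : Fin k,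
      (ℙ : Measure Ω).map (V i) = Measure.pi (fun e : ↥U => (ℙ : Measure Ω).map (d e.1 i)) := by
    intro i
    haveI : ∀ e : ↥U, IsProbabilityMeasure ((ℙ : Measure Ω).map (d e.1 i)) :=
      fun e => Measure.isProbabilityMeasure_map (hdm e.1 i).aemeasurable
    refine (Measure.pi_eq ?_).symm
    intro s hs
    rw [Measure.map_apply (hVm i) (MeasurableSet.univ_pi hs)]
    have hpre : V i ⁻¹' (Set.univ.pi s)
        = ⋂ p ∈ T i, (fun p : ↥U × Fin k => d p.1.1 p.2) p ⁻¹' ((fun p : ↥U × Fin k => s p.1) p) := by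
      ext ω
      simp only [Set.mem_preimage, Set.mem_pi, Set.mem_univ, true_implies, Set.mem_iInter]
      constructor
      · intro h p hp
        rw [hTmem] at hp
        subst hp
        exact h p.1
      · intro h e
        exact h (e, i) (by rw [hTmem])
    rw [hpre, hindep.measure_inter_preimage_eq_mul (T i)
      (sets := fun p : ↥U × Fin k => s p.1) (fun p _ => hs p.1)]
    rw [hT, Finset.prod_map]
    refine Finset.prod_congr rfl fun e _ => ?_
    rw [Measure.map_apply (hdm e.1 i) (hs e)]
    rfl
  have hVid : ∀ i i' : Fin k, IdentDistrib (V i) (V i') ℙ ℙ := by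
    intro i i'
    refine ⟨(hVm i).aemeasurable, (hVm i').aemeasurable, ?_⟩
    rw [hlaw i, hlaw i']
    exact congrArg Measure.pi (funext fun e => (hid e.1 e.2 i i').map_eq)
  -- coefficients
  set cP : E → ℝ := fun e => (if e ∈ S₁ then (1:ℝ) else 0) - (if e ∈ S₂ then (1:ℝ) else 0)
    with hcP
  set cQ : E → ℝ := fun e => (if e ∈ S₁ then (1:ℝ) else 0) + (if e ∈ S₂ then (1:ℝ) else 0)
      + (if e ∈ S₃ then (2:ℝ) else 0) - (if e ∈ S₄ then (2:ℝ) else 0) with hcQ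
  have hite : ∀ (s : Finset E) (c : ℝ), s ⊆ U → ∀ (i : Fin k) (ω : Ω),
      (∑ e ∈ U, (if e ∈ s then c else 0) * d e i ω) = c * ∑ e ∈ s, d e i ω := by
    intro s c hs i ω
    have h1 : (∑ e ∈ U, (if e ∈ s then c else 0) * d e i ω)
        = ∑ e ∈ U, (if e ∈ s then c * d e i ω else 0) := by
      refine Finset.sum_congr rfl fun e _ => ?_
      by_cases h : e ∈ s <;> simp [h]
    rw [h1, ← Finset.sum_filter, Finset.filter_mem_eq_inter,
      Finset.inter_eq_right.mpr hs, Finset.mul_sum]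
  have hPsum : ∀ (i : Fin k) (ω : Ω), (∑ e ∈ U, cP e * d e i ω) = P i ω := by
    intro i ω
    simp only [hcP, sub_mul, Finset.sum_sub_distrib]
    rw [hite S₁ 1 hsub1 i ω, hite S₂ 1 hsub2 i ω, hPdef]
    ring
  have hQsum : ∀ (i : Fin k) (ω : Ω), (∑ e ∈ U, cQ e * d e i ω) = Q i ω := by
    intro i ω
    simp only [hcQ, add_mul, sub_mul, Finset.sum_sub_distrib, Finset.sum_add_distrib]
    rw [hite S₁ 1 hsub1 i ω, hite S₂ 1 hsub2 i ω, hite S₃ 2 hsub3 i ω,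
      hite S₄ 2 hsub4 i ω, hQdef]
    ring
  -- P i and Q i as functions of the vector V i
  set FP : (↥U → ℝ) → ℝ := fun v => ∑ e : ↥U, cP e.1 * v e with hFP
  set FQ : (↥U → ℝ) → ℝ := fun v => ∑ e : ↥U, cQ e.1 * v e with hFQ
  have hFPm : Measurable FP :=
    Finset.measurable_sum _ fun e _ => (measurable_pi_apply e).const_mul _
  have hFQm : Measurable FQ :=
    Finset.measurable_sum _ fun e _ => (measurable_pi_apply e).const_mul _
  have hFPV : ∀ (i : Fin k) (ω : Ω), FP (V i ω) = P i ω := by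
    intro i ω
    rw [hFP]
    exact (Finset.sum_coe_sort U (fun e => cP e * d e i ω)).trans (hPsum i ω)
  have hFQV : ∀ (i : Fin k) (ω : Ω), FQ (V i ω) = Q i ω := by
    intro i ω
    rw [hFQ]
    exact (Finset.sum_coe_sort U (fun e => cQ e * d e i ω)).trans (hQsum i ω)
  -- equal expectations
  have hEP : ∀ i : Fin k, ∫ ω, P i ω = μP := by
    intro i
    have h1 : ∀ i' : Fin k, (FP ∘ (V i')) = P i' := fun i' => funext fun ω => hFPV i' ω
    have := ((hVid i i0).comp hFPm).integral_eq
    rw [h1 i, h1 i0] at this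
    exact this
  have hEQ : ∀ i : Fin k, ∫ ω, Q i ω = μQ := by
    intro i
    have h1 : ∀ i' : Fin k, (FQ ∘ (V i')) = Q i' := fun i' => funext fun ω => hFQV i' ω
    have := ((hVid i i0).comp hFQm).integral_eq
    rw [h1 i, h1 i0] at this
    exact this
  -- φ equals the expectation for every sample index i
  have hHident : ∀ i : Fin k,
      ∫ ω, (P i ω - μP) ^ (j - 1) * (Q i ω - μQ) = φ := by
    intro i
    set GG : (↥U → ℝ) → ℝ := fun v => (FP v - μP) ^ (j - 1) * (FQ v - μQ) with hGG
    have hGGm : Measurable GG :=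
      ((hFPm.sub_const μP).pow_const _).mul (hFQm.sub_const μQ)
    have h1 : ∀ i' : Fin k, (GG ∘ (V i'))
        = fun ω => (P i' ω - μP) ^ (j - 1) * (Q i' ω - μQ) := by
      intro i'
      funext ω
      simp only [Function.comp_apply, hGG, hFPV i' ω, hFQV i' ω]
    have h2 := ((hVid i i0).comp hGGm).integral_eq
    rw [h1 i, h1 i0] at h2
    exact h2
  -- pairwise independence of the samples
  have hRind : ∀ (c : E → ℝ) (i i' : Fin k), i ≠ i' →
      IndepFun (fun ω => ∑ e ∈ U, c e * d e i ω) (fun ω => ∑ e ∈ U, c e * d e i' ω) ℙ := by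
    intro c i i' hne
    have h := hindep.indepFun_finset (T i) (T i') (hTdisj i i' hne)
      (fun p => hdm p.1.1 p.2)
    set Φ : ∀ i'' : Fin k, ((↥(T i'')) → ℝ) → ℝ :=
      fun i'' w => ∑ x : ↥(T i''), c x.1.1.1 * w x with hΦ
    have hΦm : ∀ i'' : Fin k, Measurable (Φ i'') := fun i'' =>
      Finset.measurable_sum _ fun x _ => (measurable_pi_apply x).const_mul _
    have h2 := h.comp (hΦm i) (hΦm i')
    have h3 : ∀ i'' : Fin k,
        (Φ i'' ∘ fun ω (p : ↥(T i'')) => d p.1.1.1 p.1.2 ω)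
          = fun ω => ∑ e ∈ U, c e * d e i'' ω := by
      intro i''
      funext ω
      simp only [Function.comp_apply, hΦ]
      rw [Finset.sum_coe_sort (T i'') (fun p => c p.1.1 * d p.1.1 p.2 ω)]
      rw [hT, Finset.sum_map]
      simp only [hemb, Function.Embedding.coeFn_mk]
      exact Finset.sum_coe_sort U (fun e => c e * d e i'' ω)
    rw [h3 i, h3 i'] at h2
    exact h2
  have hPind : ∀ i i' : Fin k, i ≠ i' → IndepFun (P i) (P i') ℙ := by
    intro i i' hne
    have h := hRind cP i i' hne
    have h1 : ∀ i'' : Fin k, (fun ω => ∑ e ∈ U, cP e * d e i'' ω) = P i'' :=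
      fun i'' => funext fun ω => hPsum i'' ω
    rwa [h1 i, h1 i'] at h
  have hQind : ∀ i i' : Fin k, i ≠ i' → IndepFun (Q i) (Q i') ℙ := by
    intro i i' hne
    have h := hRind cQ i i' hne
    have h1 : ∀ i'' : Fin k, (fun ω => ∑ e ∈ U, cQ e * d e i'' ω) = Q i'' :=
      fun i'' => funext fun ω => hQsum i'' ω
    rwa [h1 i, h1 i'] at h
  -- second moment bound for the centered empirical mean
  have hmean : ∀ (R : Fin k → Ω → ℝ) (μR : ℝ),
      (∀ i, Measurable (R i)) → (∀ i ω, |R i ω| ≤ K) →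
      (∀ i : Fin k, ∫ ω, R i ω = μR) →
      (∀ i i' : Fin k, i ≠ i' → IndepFun (R i) (R i') ℙ) →
      ∫ ω, |(k : ℝ)⁻¹ * ∑ i, R i ω - μR| ≤ 2 * K / Real.sqrt k := by
    intro R μR hRm hRb hRE hRind'
    have hμRb : |μR| ≤ K := by rw [← hRE i0]; exact habs_int _ _ (hRb i0)
    set Z : Fin k → Ω → ℝ := fun i ω => R i ω - μR with hZ
    have hZm : ∀ i, Measurable (Z i) := fun i => (hRm i).sub_const μR
    have hZb : ∀ i ω, |Z i ω| ≤ 2 * K := by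
      intro i ω
      rw [hZ]
      calc |R i ω - μR| ≤ |R i ω| + |μR| := abs_sub _ _
        _ ≤ K + K := add_le_add (hRb i ω) hμRb
        _ = 2 * K := by ring
    have hZint : ∀ i, Integrable (Z i) ℙ := fun i => hint _ _ (hZm i) (hZb i)
    have hZ0 : ∀ i, ∫ ω, Z i ω = 0 := by
      intro i
      rw [hZ]
      rw [integral_sub (hint _ _ (hRm i) (hRb i)) (integrable_const μR)]
      simp [hRE i, measure_univ]
    have hZZint : ∀ i i' : Fin k, Integrable (fun ω => Z i ω * Z i' ω) ℙ := by
      intro i i'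
      refine hint _ ((2*K)*(2*K)) ((hZm i).mul (hZm i')) fun ω => ?_
      rw [abs_mul]
      exact mul_le_mul (hZb i ω) (hZb i' ω) (abs_nonneg _) (by positivity)
    have hZZ : ∀ i i' : Fin k, i ≠ i' → ∫ ω, Z i ω * Z i' ω = 0 := by
      intro i i' hne
      have hind : IndepFun (Z i) (Z i') ℙ := by
        have := (hRind' i i' hne).comp
          (φ := fun x : ℝ => x - μR) (ψ := fun x : ℝ => x - μR)
          (measurable_id.sub_const μR) (measurable_id.sub_const μR)
        exact this
      have := hind.integral_mul_eq_mul_integral (hZint i).aestronglyMeasurable (hZint i').aestronglyMeasurable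
      rw [hZ0 i, hZ0 i'] at this
      simpa [Pi.mul_apply] using this
    -- mean as average of the Z's
    set Xb : Ω → ℝ := fun ω => (k : ℝ)⁻¹ * ∑ i, R i ω - μR with hXb
    have hXbeq : ∀ ω, Xb ω = (k : ℝ)⁻¹ * ∑ i, Z i ω := by
      intro ω
      rw [hXb, hZ]
      simp only [Finset.sum_sub_distrib, Finset.sum_const, Finset.card_univ,
        Fintype.card_fin, nsmul_eq_mul]
      field_simp
    have hXbm : Measurable Xb := by
      rw [hXb]
      exact ((Finset.measurable_sum Finset.univ fun i _ => hRm i).const_mul _).sub_const μR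
    have hXbb : ∀ ω, |Xb ω| ≤ 2 * K := by
      intro ω
      rw [hXbeq]
      have h1 : |∑ i, Z i ω| ≤ ∑ _i : Fin k, 2 * K :=
        (Finset.abs_sum_le_sum_abs _ _).trans (Finset.sum_le_sum fun i _ => hZb i ω)
      rw [abs_mul, abs_inv, Nat.abs_cast]
      have h2 : (∑ _i : Fin k, (2:ℝ) * K) = k * (2 * K) := by
        rw [Finset.sum_const, Finset.card_univ, Fintype.card_fin, nsmul_eq_mul]
      calc (k:ℝ)⁻¹ * |∑ i, Z i ω| ≤ (k:ℝ)⁻¹ * (k * (2 * K)) := by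
            refine mul_le_mul_of_nonneg_left ?_ (by positivity)
            rw [← h2]; exact h1
        _ = 2 * K := by field_simp
    -- second moment
    have hsq : ∫ ω, (Xb ω) ^ 2 ≤ (2 * K) ^ 2 / k := by
      have hexp : ∀ ω, (Xb ω) ^ 2
          = (k:ℝ)⁻¹ ^ 2 * ∑ i : Fin k, ∑ i' : Fin k, Z i ω * Z i' ω := by
        intro ω
        rw [hXbeq, mul_pow]
        congr 1
        rw [pow_two, Finset.sum_mul_sum]
      have hint2 : ∀ i : Fin k, Integrable (fun ω => ∑ i' : Fin k, Z i ω * Z i' ω) ℙ :=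
        fun i => integrable_finset_sum _ fun i' _ => hZZint i i'
      calc ∫ ω, (Xb ω) ^ 2
          = (k:ℝ)⁻¹ ^ 2 * ∑ i : Fin k, ∑ i' : Fin k, ∫ ω, Z i ω * Z i' ω := by
            have h0 : (∫ ω, (Xb ω) ^ 2)
                = ∫ ω, (k:ℝ)⁻¹ ^ 2 * ∑ i : Fin k, ∑ i' : Fin k, Z i ω * Z i' ω :=
              integral_congr_ae (ae_of_all _ fun ω => hexp ω)
            rw [h0, integral_const_mul, integral_finset_sum _ (fun i _ => hint2 i)]
            congr 1
            exact Finset.sum_congr rfl fun i _ =>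
              integral_finset_sum _ (fun i' _ => hZZint i i')
        _ ≤ (k:ℝ)⁻¹ ^ 2 * (k * (2 * K) ^ 2) := by
            refine mul_le_mul_of_nonneg_left ?_ (by positivity)
            have hdiag : ∀ i : Fin k, (∑ i' : Fin k, ∫ ω, Z i ω * Z i' ω) ≤ (2 * K) ^ 2 := by
              intro i
              have : (∑ i' : Fin k, ∫ ω, Z i ω * Z i' ω) = ∫ ω, Z i ω * Z i ω := by
                refine Finset.sum_eq_single_of_mem i (Finset.mem_univ i) ?_
                intro i' _ hne
                exact hZZ i i' (Ne.symm hne)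
              rw [this]
              have : ∫ ω, Z i ω * Z i ω ≤ ∫ _ω, (2*K)^2 ∂(ℙ : Measure Ω) := by
                refine integral_mono (hZZint i i) (integrable_const _) fun ω => ?_
                have := hZb i ω
                nlinarith [abs_nonneg (Z i ω), sq_abs (Z i ω), neg_abs_le (Z i ω)]
              simpa [measure_univ] using this
            calc (∑ i : Fin k, ∑ i' : Fin k, ∫ ω, Z i ω * Z i' ω)
                ≤ ∑ _i : Fin k, (2 * K) ^ 2 := Finset.sum_le_sum fun i _ => hdiag i
              _ = k * (2 * K) ^ 2 := by
                  rw [Finset.sum_const, Finset.card_univ, Fintype.card_fin, nsmul_eq_mul]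
        _ = (2 * K) ^ 2 / k := by field_simp
    -- from second moment to first absolute moment
    have habs : ∫ ω, |Xb ω| ≤ 2 * K / Real.sqrt k := by
      set t : ℝ := ∫ ω, |Xb ω| with ht
      have ht0 : 0 ≤ t := integral_nonneg fun ω => abs_nonneg _
      have hmem : MemLp (fun ω => |Xb ω|) 2 ℙ := by
        refine MemLp.of_bound hXbm.abs.aestronglyMeasurable (2 * K) ?_
        exact ae_of_all _ fun ω => by
          rw [Real.norm_eq_abs, abs_abs]; exact hXbb ω
      have hvar := variance_nonneg (fun ω => |Xb ω|) ℙ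
      rw [variance_eq_sub hmem] at hvar
      have hsq_eq : ∫ x, ((fun ω => |Xb ω|) ^ 2) x = ∫ ω, (Xb ω) ^ 2 := by
        refine integral_congr_ae (ae_of_all _ fun ω => ?_)
        simp [sq_abs]
      rw [hsq_eq] at hvar
      have ht2 : t ^ 2 ≤ (2 * K) ^ 2 / k := by
        have : t ^ 2 ≤ ∫ ω, (Xb ω) ^ 2 := by linarith
        exact this.trans hsq
      have hsk : (0:ℝ) < Real.sqrt k := Real.sqrt_pos.mpr hk0
      have hrt : (2 * K / Real.sqrt k) ^ 2 = (2 * K) ^ 2 / k := by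
        rw [div_pow, Real.sq_sqrt hk0.le]
      have : t ^ 2 ≤ (2 * K / Real.sqrt k) ^ 2 := by rw [hrt]; exact ht2
      exact (pow_le_pow_iff_left₀ ht0 (by positivity) two_ne_zero).mp this
    exact habs
  have hEXb := hmean P μP hPm hPb hEP hPind
  have hEYb := hmean Q μQ hQm hQb hEQ hQind
  -- notation for the empirical means
  set Pbar : Ω → ℝ := fun ω => (k : ℝ)⁻¹ * ∑ i, P i ω with hPbar
  set Qbar : Ω → ℝ := fun ω => (k : ℝ)⁻¹ * ∑ i, Q i ω with hQbar
  have hPbarm : Measurable Pbar := by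
    rw [hPbar]
    exact (Finset.measurable_sum Finset.univ fun i _ => hPm i).const_mul _
  have hQbarm : Measurable Qbar := by
    rw [hQbar]
    exact (Finset.measurable_sum Finset.univ fun i _ => hQm i).const_mul _
  have hPbarb : ∀ ω, |Pbar ω| ≤ K := by
    intro ω
    rw [hPbar]
    rw [abs_mul, abs_inv, Nat.abs_cast]
    have h1 : |∑ i, P i ω| ≤ k * K := by
      refine (Finset.abs_sum_le_sum_abs _ _).trans ?_
      calc (∑ i, |P i ω|) ≤ ∑ _i : Fin k, K := Finset.sum_le_sum fun i _ => hPb i ω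
        _ = k * K := by rw [Finset.sum_const, Finset.card_univ, Fintype.card_fin, nsmul_eq_mul]
    calc (k:ℝ)⁻¹ * |∑ i, P i ω| ≤ (k:ℝ)⁻¹ * (k * K) :=
          mul_le_mul_of_nonneg_left h1 (by positivity)
      _ = K := by field_simp
  have hQbarb : ∀ ω, |Qbar ω| ≤ K := by
    intro ω
    rw [hQbar]
    rw [abs_mul, abs_inv, Nat.abs_cast]
    have h1 : |∑ i, Q i ω| ≤ k * K := by
      refine (Finset.abs_sum_le_sum_abs _ _).trans ?_
      calc (∑ i, |Q i ω|) ≤ ∑ _i : Fin k, K := Finset.sum_le_sum fun i _ => hQb i ω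
        _ = k * K := by rw [Finset.sum_const, Finset.card_univ, Fintype.card_fin, nsmul_eq_mul]
    calc (k:ℝ)⁻¹ * |∑ i, Q i ω| ≤ (k:ℝ)⁻¹ * (k * K) :=
          mul_le_mul_of_nonneg_left h1 (by positivity)
      _ = K := by field_simp
  -- per-sample integrands
  set g : Fin k → Ω → ℝ := fun i ω => (P i ω - Pbar ω) ^ (j - 1) * (Q i ω - Qbar ω) with hg
  set h : Fin k → Ω → ℝ := fun i ω => (P i ω - μP) ^ (j - 1) * (Q i ω - μQ) with hh
  have hgm : ∀ i, Measurable (g i) := fun i =>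
    (((hPm i).sub hPbarm).pow_const _).mul ((hQm i).sub hQbarm)
  have hhm : ∀ i, Measurable (h i) := fun i =>
    (((hPm i).sub_const μP).pow_const _).mul ((hQm i).sub_const μQ)
  have hgb : ∀ i ω, |g i ω| ≤ (4*K) ^ (j-1) * (4*K) := by
    intro i ω
    rw [hg, abs_mul, abs_pow]
    have h1 : |P i ω - Pbar ω| ≤ 4 * K := by
      calc |P i ω - Pbar ω| ≤ |P i ω| + |Pbar ω| := abs_sub _ _
        _ ≤ K + K := add_le_add (hPb i ω) (hPbarb ω)
        _ ≤ 4 * K := by nlinarith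
    have h2 : |Q i ω - Qbar ω| ≤ 4 * K := by
      calc |Q i ω - Qbar ω| ≤ |Q i ω| + |Qbar ω| := abs_sub _ _
        _ ≤ K + K := add_le_add (hQb i ω) (hQbarb ω)
        _ ≤ 4 * K := by nlinarith
    exact mul_le_mul (pow_le_pow_left₀ (abs_nonneg _) h1 _) h2 (abs_nonneg _) (by positivity)
  have hhb : ∀ i ω, |h i ω| ≤ (4*K) ^ (j-1) * (4*K) := by
    intro i ω
    rw [hh, abs_mul, abs_pow]
    have h1 : |P i ω - μP| ≤ 4 * K := by
      calc |P i ω - μP| ≤ |P i ω| + |μP| := abs_sub _ _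
        _ ≤ K + K := add_le_add (hPb i ω) hμPb
        _ ≤ 4 * K := by nlinarith
    have h2 : |Q i ω - μQ| ≤ 4 * K := by
      calc |Q i ω - μQ| ≤ |Q i ω| + |μQ| := abs_sub _ _
        _ ≤ K + K := add_le_add (hQb i ω) hμQb
        _ ≤ 4 * K := by nlinarith
    exact mul_le_mul (pow_le_pow_left₀ (abs_nonneg _) h1 _) h2 (abs_nonneg _) (by positivity)
  have hgint : ∀ i, Integrable (g i) ℙ := fun i => hint _ _ (hgm i) (hgb i)
  have hhint : ∀ i, Integrable (h i) ℙ := fun i => hint _ _ (hhm i) (hhb i)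
  -- pointwise bound on the difference
  set c₁ : ℝ := (j - 1 : ℕ) * (4*K) ^ (j-2) * (4*K) with hc₁
  set c₂ : ℝ := (4*K) ^ (j-1) with hc₂
  have hc₁0 : 0 ≤ c₁ := by rw [hc₁]; positivity
  have hc₂0 : 0 ≤ c₂ := by rw [hc₂]; positivity
  have hptw : ∀ i ω, |g i ω - h i ω| ≤ c₁ * |Pbar ω - μP| + c₂ * |Qbar ω - μQ| := by
    intro i ω
    rw [hg, hh]
    set A : ℝ := P i ω - Pbar ω with hA
    set X : ℝ := P i ω - μP with hX
    set Bq : ℝ := Q i ω - Qbar ω with hBq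
    set Yq : ℝ := Q i ω - μQ with hYq
    have hAb : |A| ≤ 4 * K := by
      rw [hA]
      calc |P i ω - Pbar ω| ≤ |P i ω| + |Pbar ω| := abs_sub _ _
        _ ≤ K + K := add_le_add (hPb i ω) (hPbarb ω)
        _ ≤ 4 * K := by nlinarith
    have hXb' : |X| ≤ 4 * K := by
      rw [hX]
      calc |P i ω - μP| ≤ |P i ω| + |μP| := abs_sub _ _
        _ ≤ K + K := add_le_add (hPb i ω) hμPb
        _ ≤ 4 * K := by nlinarith
    have hBb : |Bq| ≤ 4 * K := by
      rw [hBq]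
      calc |Q i ω - Qbar ω| ≤ |Q i ω| + |Qbar ω| := abs_sub _ _
        _ ≤ K + K := add_le_add (hQb i ω) (hQbarb ω)
        _ ≤ 4 * K := by nlinarith
    have hAX : A - X = -(Pbar ω - μP) := by rw [hA, hX]; ring
    have hBY : Bq - Yq = -(Qbar ω - μQ) := by rw [hBq, hYq]; ring
    have hsplit : A ^ (j-1) * Bq - X ^ (j-1) * Yq
        = (A ^ (j-1) - X ^ (j-1)) * Bq + X ^ (j-1) * (Bq - Yq) := by ring
    rw [hsplit]
    have t1 : |(A ^ (j-1) - X ^ (j-1)) * Bq| ≤ c₁ * |Pbar ω - μP| := by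
      rw [abs_mul]
      have hp := aux_abs_pow_sub_pow hAb hXb' (j - 1)
      have hAXabs : |A - X| = |Pbar ω - μP| := by rw [hAX, abs_neg]
      rw [hAXabs] at hp
      have hsub : (j - 1 : ℕ) - 1 = j - 2 := by omega
      rw [hsub] at hp
      calc |A ^ (j-1) - X ^ (j-1)| * |Bq|
          ≤ ((j - 1 : ℕ) * (4*K) ^ (j-2) * |Pbar ω - μP|) * (4*K) := by
            refine mul_le_mul hp hBb (abs_nonneg _) ?_
            positivity
        _ = c₁ * |Pbar ω - μP| := by rw [hc₁]; ring
    have t2 : |X ^ (j-1) * (Bq - Yq)| ≤ c₂ * |Qbar ω - μQ| := by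
      rw [abs_mul, hBY, abs_neg, abs_pow]
      refine mul_le_mul ?_ le_rfl (abs_nonneg _) hc₂0
      rw [hc₂]
      exact pow_le_pow_left₀ (abs_nonneg _) hXb' _
    calc |(A ^ (j-1) - X ^ (j-1)) * Bq + X ^ (j-1) * (Bq - Yq)|
        ≤ |(A ^ (j-1) - X ^ (j-1)) * Bq| + |X ^ (j-1) * (Bq - Yq)| := abs_add_le _ _
      _ ≤ c₁ * |Pbar ω - μP| + c₂ * |Qbar ω - μQ| := add_le_add t1 t2
  -- per-sample integral bound
  set B : ℝ := c₁ * (2 * K / Real.sqrt k) + c₂ * (2 * K / Real.sqrt k) with hB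
  have hXbabs_m : Measurable (fun ω => |Pbar ω - μP|) := (hPbarm.sub_const μP).abs
  have hYbabs_m : Measurable (fun ω => |Qbar ω - μQ|) := (hQbarm.sub_const μQ).abs
  have hXbabs_int : Integrable (fun ω => |Pbar ω - μP|) ℙ := by
    refine hint _ (2*K) hXbabs_m fun ω => ?_
    rw [abs_abs]
    calc |Pbar ω - μP| ≤ |Pbar ω| + |μP| := abs_sub _ _
      _ ≤ K + K := add_le_add (hPbarb ω) hμPb
      _ = 2 * K := by ring
  have hYbabs_int : Integrable (fun ω => |Qbar ω - μQ|) ℙ := by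
    refine hint _ (2*K) hYbabs_m fun ω => ?_
    rw [abs_abs]
    calc |Qbar ω - μQ| ≤ |Qbar ω| + |μQ| := abs_sub _ _
      _ ≤ K + K := add_le_add (hQbarb ω) hμQb
      _ = 2 * K := by ring
  have hper : ∀ i : Fin k, |(∫ ω, g i ω) - φ| ≤ B := by
    intro i
    rw [← hHident i]
    rw [← integral_sub (hgint i) (hhint i)]
    have h1 : |∫ ω, (g i ω - h i ω)| ≤ ∫ ω, |g i ω - h i ω| := by
      have := norm_integral_le_integral_norm (μ := (ℙ : Measure Ω)) (f := fun ω => g i ω - h i ω)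
      simpa [Real.norm_eq_abs] using this
    refine h1.trans ?_
    have h2 : ∫ ω, |g i ω - h i ω|
        ≤ ∫ ω, (c₁ * |Pbar ω - μP| + c₂ * |Qbar ω - μQ|) := by
      refine integral_mono ((hgint i).sub (hhint i)).abs ?_ fun ω => hptw i ω
      exact (hXbabs_int.const_mul c₁).add (hYbabs_int.const_mul c₂)
    refine h2.trans ?_
    rw [integral_add (hXbabs_int.const_mul c₁) (hYbabs_int.const_mul c₂),
      integral_const_mul, integral_const_mul, hB]
    exact add_le_add (mul_le_mul_of_nonneg_left hEXb hc₁0)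
      (mul_le_mul_of_nonneg_left hEYb hc₂0)
  -- assembling
  have hphat : (∫ ω, phat ω) = (k : ℝ)⁻¹ * ∑ i, ∫ ω, g i ω := by
    have h1 : phat = fun ω => (k : ℝ)⁻¹ * ∑ i, g i ω := rfl
    rw [h1, integral_const_mul, integral_finset_sum _ fun i _ => hgint i]
  have hmain : |(∫ ω, phat ω) - φ| ≤ B := by
    rw [hphat]
    have h1 : (k : ℝ)⁻¹ * (∑ i, ∫ ω, g i ω) - φ
        = (k : ℝ)⁻¹ * ∑ i : Fin k, ((∫ ω, g i ω) - φ) := by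
      rw [Finset.sum_sub_distrib, Finset.sum_const, Finset.card_univ, Fintype.card_fin,
        nsmul_eq_mul, mul_sub]
      field_simp
    rw [h1, abs_mul, abs_inv, Nat.abs_cast]
    have h2 : |∑ i : Fin k, ((∫ ω, g i ω) - φ)| ≤ k * B := by
      refine (Finset.abs_sum_le_sum_abs _ _).trans ?_
      calc (∑ i : Fin k, |(∫ ω, g i ω) - φ|) ≤ ∑ _i : Fin k, B :=
            Finset.sum_le_sum fun i _ => hper i
        _ = k * B := by rw [Finset.sum_const, Finset.card_univ, Fintype.card_fin, nsmul_eq_mul]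
    calc (k:ℝ)⁻¹ * |∑ i : Fin k, ((∫ ω, g i ω) - φ)| ≤ (k:ℝ)⁻¹ * (k * B) :=
          mul_le_mul_of_nonneg_left h2 (by positivity)
      _ = B := by field_simp
  refine hmain.trans ?_
  -- final arithmetic: B ≤ C' (MΔ)^j / √k
  have hsk : (0:ℝ) < Real.sqrt k := Real.sqrt_pos.mpr hk0
  have hpow1 : (4*K) ^ (j-2) * (4*K) = (4*K) ^ (j-1) := by
    rw [← pow_succ]
    congr 1
    omega
  have hc₁' : c₁ = (j - 1 : ℕ) * (4*K) ^ (j-1) := by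
    rw [hc₁, mul_assoc, hpow1]
  have hBeq : B = ((j - 1 : ℕ) + 1) * ((4*K) ^ (j-1) * (2 * K)) / Real.sqrt k := by
    rw [hB, hc₁', hc₂]
    field_simp
  have hj1 : ((j - 1 : ℕ) : ℝ) + 1 = (j : ℝ) := by
    have : j - 1 + 1 = j := by omega
    exact_mod_cast congrArg (Nat.cast (R := ℝ)) this
  rw [hBeq, hj1]
  rw [div_le_div_iff₀ hsk hsk]
  have hfin : (4*K) ^ (j-1) * (2 * K) ≤ 96 ^ j * (M * Δ) ^ j := by
    have h4K : (4*K) ^ (j-1) * (2 * K) ≤ (4*K) ^ (j-1) * (4*K) := by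
      have : 2 * K ≤ 4 * K := by nlinarith
      exact mul_le_mul_of_nonneg_left this (by positivity)
    have h4K2 : (4*K) ^ (j-1) * (4*K) = (4*K) ^ j := by
      rw [← pow_succ]
      congr 1
      omega
    have h4K3 : (4*K : ℝ) ^ j = 96 ^ j * (M * Δ) ^ j := by
      rw [hKdef, ← mul_pow]
      congr 1
      ring
    calc (4*K) ^ (j-1) * (2 * K) ≤ (4*K) ^ (j-1) * (4*K) := h4K
      _ = (4*K) ^ j := h4K2
      _ = 96 ^ j * (M * Δ) ^ j := h4K3
  calc (j : ℝ) * ((4*K) ^ (j-1) * (2 * K)) * Real.sqrt k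
      ≤ (j : ℝ) * (96 ^ j * (M * Δ) ^ j) * Real.sqrt k := by
        refine mul_le_mul_of_nonneg_right ?_ hsk.le
        refine mul_le_mul_of_nonneg_left hfin ?_
        positivity
    _ = (j : ℝ) * 96 ^ j * (M * Δ) ^ j * Real.sqrt k := by ring
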